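/- Let A be a unital associative F-algebra (char F = 0) with L, T, D ∈ A satisfying [T, L] = L, [D, T] = 0, and [D, L] = γ L for a scalar γ. Define u_a = Σ_{i≥0} ((−1)^i/i!) T_{−a}^[i] L^i t^i in A[[t]]. Then D · u_a = −γ (T − a) u_{a+1} L t + u_a D. -/

import Mathlib

/-- Falling factorial `T_a^[k] = (T+a)(T+a−1)⋯(T+a−k+1)` in an `F`-algebra. -/
noncomputable def fall {F A : Type*} [Field F] [Ring A] [Algebra F A]
    (x : A) (a : F) : ℕ → A
  | 0 => 1
  | n + 1 => fall x a n * (x + algebraMap F A (a - n))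

lemma fall_succ_left {F A : Type*} [Field F] [Ring A] [Algebra F A]
    (x : A) (a : F) (n : ℕ) :
    fall x a (n + 1) = (x + algebraMap F A a) * fall x (a - 1) n := by
  induction n with
  | zero => simp [fall]
  | succ n ih =>
      have h : a - ((n + 1 : ℕ) : F) = (a - 1) - n := by push_cast; ring
      rw [show n + 1 + 1 = (n + 1) + 1 from rfl, fall, ih, h, fall, mul_assoc]

lemma D_comm_fall {F A : Type*} [Field F] [Ring A] [Algebra F A]
    (T D : A) (hDT : D * T = T * D) (a : F) (n : ℕ) :
    D * fall T a n = fall T a n * D := by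
  induction n with
  | zero => simp [fall]
  | succ n ih =>
      rw [fall, ← mul_assoc, ih, mul_assoc, mul_assoc]
      congr 1
      rw [mul_add, add_mul, hDT, Algebra.commutes]

lemma D_comm_pow {F A : Type*} [Field F] [Ring A] [Algebra F A]
    (L D : A) (γ : F) (hDL : D * L - L * D = γ • L) (n : ℕ) :
    D * L ^ n = L ^ n * D + ((n : F) * γ) • L ^ n := by
  induction n with
  | zero => simp
  | succ n ih =>
      have hDL' : D * L = L * D + γ • L := by rw [← hDL]; abel
      rw [pow_succ, ← mul_assoc, ih, add_mul, mul_assoc, hDL']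
      rw [mul_add, mul_smul_comm, smul_mul_assoc, ← mul_assoc]
      push_cast
      module

theorem D_mul_u {F A : Type*} [Field F] [CharZero F] [Ring A] [Algebra F A]
    (T L D : A) (γ : F) (hTL : T * L - L * T = L)
    (hDT : D * T = T * D) (hDL : D * L - L * D = γ • L) (a : F) :
    letI u : F → PowerSeries A := fun c =>
      PowerSeries.mk fun i => (((-1 : F) ^ i) / i.factorial) • (fall T (-c) i * L ^ i)
    PowerSeries.C (R := A) D * u a
      = -(γ • (PowerSeries.C (R := A) (T - algebraMap F A a) * u (a + 1) *
          PowerSeries.C (R := A) L * PowerSeries.X))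
        + u a * PowerSeries.C (R := A) D := by
  ext n
  rcases n with _ | n
  · simp [fall]
  · have hfact : ((n.factorial : F)) ≠ 0 := by
      exact_mod_cast Nat.cast_ne_zero.mpr n.factorial_ne_zero
    simp only [map_add, map_neg, map_smul, PowerSeries.coeff_C_mul,
      PowerSeries.coeff_mul_C, PowerSeries.coeff_succ_mul_X, PowerSeries.coeff_mk,
      PowerSeries.coeff_smul]
    set c : F := ((-1 : F) ^ (n + 1)) / (n + 1).factorial with hc
    set c' : F := ((-1 : F) ^ n) / n.factorial with hc'
    have hfall : fall T (-a) (n + 1) = (T - algebraMap F A a) * fall T (-(a + 1)) n := by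
      rw [fall_succ_left]
      congr 2 <;> [skip; ring_nf] <;> simp [sub_eq_add_neg]
    have key : D * (fall T (-a) (n + 1) * L ^ (n + 1))
        = fall T (-a) (n + 1) * L ^ (n + 1) * D
          + (((n : F) + 1) * γ) • (fall T (-a) (n + 1) * L ^ (n + 1)) := by
      rw [← mul_assoc, D_comm_fall T D hDT, mul_assoc, D_comm_pow L D γ hDL]
      push_cast
      rw [mul_add, mul_smul_comm, ← mul_assoc]
    have hn1 : ((n : F) + 1) ≠ 0 := Nat.cast_add_one_ne_zero n
    have hcc : c * (((n : F) + 1) * γ) = -(γ * c') := by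
      rw [hc, hc', Nat.factorial_succ]
      push_cast
      field_simp
      ring_nf
    calc D * (c • (fall T (-a) (n + 1) * L ^ (n + 1)))
        = c • (D * (fall T (-a) (n + 1) * L ^ (n + 1))) := (mul_smul_comm _ _ _)
      _ = c • (fall T (-a) (n + 1) * L ^ (n + 1) * D)
          + (c * (((n : F) + 1) * γ)) • (fall T (-a) (n + 1) * L ^ (n + 1)) := by
            rw [key, smul_add, smul_smul]
      _ = -(γ • ((T - algebraMap F A a) * (c' • (fall T (-(a + 1)) n * L ^ n)) * L))
          + c • (fall T (-a) (n + 1) * L ^ (n + 1)) * D := by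
            rw [hcc, smul_mul_assoc, add_comm]
            congr 1
            rw [mul_smul_comm, smul_mul_assoc, smul_smul, ← neg_smul, hfall]
            congr 1
            simp [pow_succ, mul_assoc]
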